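/- Let (Y,T) be a minimal continuous flow, let t > 0 be such that the time-(1/t) map T^{1/t} is not minimal, and let M be a nonempty proper closed subset of Y that is minimal for the homeomorphism T^{1/t}. Then there exists t₀ > 0 such that: (i) {s ∈ ℝ : T^s(M) = M} = t₀ℤ; (ii) the sets T^s(M) for 0 ≤ s < t₀ are pairwise disjoint and their union is Y (so they form a partition of Y); (iii) 1/t₀ is an eigenvalue of (Y,T); and (iv) 1/t = m·t₀ for some nonzero integer m. -/

import Mathlib

/-! The stabilizer `S = {s | T s '' M = M}` is a closed subgroup of `ℝ`. It is proper because `M`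
is not flow-invariant, and it contains `1 / t ≠ 0`, so `S = t₀ ℤ` with `t₀ > 0`. Since `T (1 / t)`
commutes with the flow, each `T u '' M ∩ M` is a closed `T (1 / t)`-invariant subset of `M`, so
`T u '' M` is either `M` or disjoint from it; hence `T s m = T s' m'` with `m, m' ∈ M` forces
`s ≡ s' mod t₀`. The flow-saturation of `M` is the image of the compact set `[0, t₀] × M`, so it
is closed and therefore all of `Y`. Thus `T s m ↦ s mod t₀` is a well-defined continuous map
`Y → ℝ / t₀ℤ`, and composed with `x ↦ exp (2πi x / t₀)` it is an eigenvector for `1 / t₀`. -/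

open Set

/-- A continuous flow: a jointly continuous action of `ℝ` on `Y` with `T 0 = id` and
`T (s + t) = T s ∘ T t`. -/
def IsFlow {Y : Type*} [TopologicalSpace Y] (T : ℝ → Y → Y) : Prop :=
  Continuous (fun p : Y × ℝ => T p.2 p.1) ∧ (∀ y, T 0 y = y) ∧
    ∀ s t : ℝ, ∀ y, T (s + t) y = T s (T t y)

/-- A set is invariant under the flow if `T t '' M = M` for all `t`. -/
def FlowInvariant {Y : Type*} (T : ℝ → Y → Y) (M : Set Y) : Prop :=
  ∀ t : ℝ, T t '' M = M

/-- The flow is minimal if the only closed invariant subsets are `∅` and `univ`. -/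
def IsMinimalFlow {Y : Type*} [TopologicalSpace Y] (T : ℝ → Y → Y) : Prop :=
  ∀ M : Set Y, IsClosed M → FlowInvariant T M → M = ∅ ∨ M = univ

/-- A self-map is minimal if the only closed subsets `M` with `g '' M = M` are `∅` and `univ`. -/
def IsMinimalMap {Y : Type*} [TopologicalSpace Y] (g : Y → Y) : Prop :=
  ∀ M : Set Y, IsClosed M → g '' M = M → M = ∅ ∨ M = univ

/-- `χ : Y → ℂ` is a (unit-circle valued) eigenvector of the flow `T` with eigenvalue `l ∈ ℝ`
if it is continuous, of modulus one, and `χ (T t y) = e^{2πi l t} * χ y`. -/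
def IsEigenvector {Y : Type*} [TopologicalSpace Y] (T : ℝ → Y → Y) (l : ℝ) (χ : Y → ℂ) : Prop :=
  Continuous χ ∧ (∀ y, ‖χ y‖ = 1) ∧
    ∀ (y : Y) (t : ℝ), χ (T t y) = Complex.exp (2 * Real.pi * Complex.I * l * t) * χ y

/-- The set `Λ(Y, T)` of eigenvalues of a flow. -/
def Eigenvalues {Y : Type*} [TopologicalSpace Y] (T : ℝ → Y → Y) : Set ℝ :=
  {l : ℝ | ∃ χ : Y → ℂ, IsEigenvector T l χ}

/-- `M` is a minimal set for the self-map `g`: it is nonempty, closed, `g`-invariant, and no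
nonempty proper closed subset of `M` is `g`-invariant. -/
def IsMinimalSubset {Y : Type*} [TopologicalSpace Y] (g : Y → Y) (M : Set Y) : Prop :=
  M.Nonempty ∧ IsClosed M ∧ g '' M = M ∧
    ∀ N : Set Y, N ⊆ M → N.Nonempty → N ≠ M → IsClosed N → g '' N ≠ N

theorem AddSubgroup.exists_pos_eq_zmultiples_of_isClosed {G : Type*} [AddCommGroup G]
    [LinearOrder G] [IsOrderedAddMonoid G] [Archimedean G] [TopologicalSpace G] [OrderTopology G]
    {S : AddSubgroup G} (hS : IsClosed (S : Set G)) (htop : S ≠ ⊤) (hbot : S ≠ ⊥) :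
    ∃ a, 0 < a ∧ S = zmultiples a := by
  obtain hdense | ⟨a, rfl⟩ := S.dense_or_cyclic
  · exact absurd (by simpa [hS.closure_eq] using hdense.closure_eq) htop
  · rw [← zmultiples_eq_closure] at hbot ⊢
    exact ⟨|a|, abs_pos.2 (mt zmultiples_eq_bot.2 hbot), (zmultiples_abs a).symm⟩

theorem one_div_mem_eigenvalues_of_phase {Y : Type*} [TopologicalSpace Y] {T : ℝ → Y → Y}
    {t₀ : ℝ} {φ : Y → AddCircle t₀} (hφ : Continuous φ) (hφT : ∀ u y, φ (T u y) = u + φ y) :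
    1 / t₀ ∈ Eigenvalues T := by
  refine ⟨fun y => AddCircle.toCircle (φ y), ?_, fun y => Circle.norm_coe _, fun y u => ?_⟩
  · fun_prop
  · change (AddCircle.toCircle (φ (T u y)) : ℂ) = _ * AddCircle.toCircle (φ y)
    rw [hφT, AddCircle.toCircle_add, Circle.coe_mul, AddCircle.toCircle_apply_mk, Circle.coe_exp]
    congr 2
    push_cast
    ring

namespace IsFlow

variable {Y : Type*} [TopologicalSpace Y] {T : ℝ → Y → Y}

theorem continuous_uncurry (hT : IsFlow T) : Continuous fun p : ℝ × Y => T p.1 p.2 :=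
  hT.1.comp continuous_swap

theorem continuous_apply (hT : IsFlow T) (s : ℝ) : Continuous (T s) :=
  hT.continuous_uncurry.comp (continuous_const.prodMk continuous_id)

theorem continuous_apply_left (hT : IsFlow T) (y : Y) : Continuous fun s => T s y :=
  hT.continuous_uncurry.comp (continuous_id.prodMk continuous_const)

theorem apply_zero (hT : IsFlow T) (y : Y) : T 0 y = y := hT.2.1 y

theorem apply_add (hT : IsFlow T) (s u : ℝ) (y : Y) : T (s + u) y = T s (T u y) := hT.2.2 s u y

theorem apply_neg_apply (hT : IsFlow T) (s : ℝ) (y : Y) : T (-s) (T s y) = y := by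
  rw [← hT.apply_add, neg_add_cancel, hT.apply_zero]

theorem apply_apply_neg (hT : IsFlow T) (s : ℝ) (y : Y) : T s (T (-s) y) = y := by
  rw [← hT.apply_add, add_neg_cancel, hT.apply_zero]

def homeomorph (hT : IsFlow T) (s : ℝ) : Y ≃ₜ Y where
  toFun := T s
  invFun := T (-s)
  left_inv := hT.apply_neg_apply s
  right_inv := hT.apply_apply_neg s
  continuous_toFun := hT.continuous_apply s
  continuous_invFun := hT.continuous_apply (-s)

theorem injective (hT : IsFlow T) (s : ℝ) : Function.Injective (T s) :=
  (hT.homeomorph s).injective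

theorem isClosed_image (hT : IsFlow T) (s : ℝ) {M : Set Y} (hM : IsClosed M) :
    IsClosed (T s '' M) :=
  (hT.homeomorph s).isClosed_image.2 hM

theorem image_image (hT : IsFlow T) (s u : ℝ) (M : Set Y) :
    T s '' (T u '' M) = T (s + u) '' M := by
  rw [Set.image_image]
  exact image_congr fun y _ => (hT.apply_add s u y).symm

theorem image_zero (hT : IsFlow T) (M : Set Y) : T 0 '' M = M := by
  simp [hT.apply_zero]

theorem image_comm (hT : IsFlow T) (s u : ℝ) (M : Set Y) :
    T s '' (T u '' M) = T u '' (T s '' M) := by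
  rw [hT.image_image, hT.image_image, add_comm]

theorem flowInvariant_iUnion_image (hT : IsFlow T) (M : Set Y) :
    FlowInvariant T (⋃ s, T s '' M) := by
  intro u
  rw [image_iUnion]
  simp_rw [hT.image_image]
  exact (Equiv.addLeft u).iSup_congr fun _ => rfl

def stabilizer (hT : IsFlow T) (M : Set Y) : AddSubgroup ℝ where
  carrier := {s | T s '' M = M}
  zero_mem' := hT.image_zero M
  add_mem' {a b} (ha : T a '' M = M) (hb : T b '' M = M) :=
    show T (a + b) '' M = M by rw [← hT.image_image, hb, ha]
  neg_mem' {a} (ha : T a '' M = M) :=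
    show T (-a) '' M = M by conv_lhs => rw [← ha, hT.image_image, neg_add_cancel, hT.image_zero]

variable {M : Set Y} {r t₀ : ℝ}

theorem mem_stabilizer (hT : IsFlow T) {s : ℝ} : s ∈ hT.stabilizer M ↔ T s '' M = M :=
  Iff.rfl

theorem image_eq_iff_mapsTo (hT : IsFlow T) {s : ℝ} :
    T s '' M = M ↔ MapsTo (T s) M M ∧ MapsTo (T (-s)) M M := by
  refine ⟨fun h => ⟨mapsTo_iff_image_subset.2 h.subset, mapsTo_iff_image_subset.2 ?_⟩,
    fun h => ?_⟩
  · conv_lhs => rw [← h, hT.image_image, neg_add_cancel, hT.image_zero]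
  · exact h.1.image_subset.antisymm fun y hy => ⟨T (-s) y, h.2 hy, hT.apply_apply_neg s y⟩

theorem isClosed_setOf_mapsTo (hT : IsFlow T) (hM : IsClosed M) :
    IsClosed {s | MapsTo (T s) M M} := by
  simp only [MapsTo, ofPred_forall]
  exact isClosed_biInter fun y _ => hM.preimage (hT.continuous_apply_left y)

theorem isClosed_stabilizer (hT : IsFlow T) (hM : IsClosed M) :
    IsClosed (hT.stabilizer M : Set ℝ) := by
  have h : (hT.stabilizer M : Set ℝ) =
      {s | MapsTo (T s) M M} ∩ Neg.neg ⁻¹' {s | MapsTo (T s) M M} :=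
    Set.ext fun s => hT.image_eq_iff_mapsTo
  rw [h]
  exact (hT.isClosed_setOf_mapsTo hM).inter ((hT.isClosed_setOf_mapsTo hM).preimage continuous_neg)

theorem stabilizer_ne_top (hT : IsFlow T) (hmin : IsMinimalFlow T) (hM : IsClosed M)
    (hne : M.Nonempty) (hM_ne_univ : M ≠ univ) : hT.stabilizer M ≠ ⊤ := fun htop =>
  (hmin M hM fun s => hT.mem_stabilizer.1 (htop ▸ AddSubgroup.mem_top s)).elim
    hne.ne_empty hM_ne_univ

/-- `T u '' M ∩ M` is a closed `T r`-invariant subset of the `T r`-minimal set `M`. -/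
theorem subset_image_of_inter_nonempty (hT : IsFlow T) {u : ℝ} (hM : IsMinimalSubset (T r) M)
    (h : (T u '' M ∩ M).Nonempty) : M ⊆ T u '' M := by
  obtain ⟨-, hMc, hMr, hMmin⟩ := hM
  have hinv : T r '' (T u '' M ∩ M) = T u '' M ∩ M := by
    rw [image_inter (hT.injective r), hT.image_comm, hMr]
  by_contra hsub
  exact hMmin _ inter_subset_right h (fun heq => hsub (heq.symm.subset.trans inter_subset_left))
    ((hT.isClosed_image u hMc).inter hMc) hinv

theorem mem_stabilizer_of_inter_nonempty (hT : IsFlow T) {u : ℝ}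
    (hM : IsMinimalSubset (T r) M) (h : (T u '' M ∩ M).Nonempty) : u ∈ hT.stabilizer M := by
  have h' : (T (-u) '' M ∩ M).Nonempty := by
    obtain ⟨_, ⟨m, hm, rfl⟩, hm'⟩ := h
    exact ⟨m, ⟨T u m, hm', hT.apply_neg_apply u m⟩, hm⟩
  refine (hT.stabilizer M).neg_mem_iff.1
    (subset_antisymm ?_ (hT.subset_image_of_inter_nonempty hM h'))
  calc T (-u) '' M ⊆ T (-u) '' (T u '' M) := image_mono (hT.subset_image_of_inter_nonempty hM h)
    _ = M := by rw [hT.image_image, neg_add_cancel, hT.image_zero]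

theorem sub_mem_stabilizer (hT : IsFlow T) {s s' : ℝ} {m m' : Y} (hM : IsMinimalSubset (T r) M)
    (hm : m ∈ M) (hm' : m' ∈ M) (h : T s m = T s' m') : s' - s ∈ hT.stabilizer M := by
  refine hT.mem_stabilizer_of_inter_nonempty hM ⟨m, ⟨m', hm', ?_⟩, hm⟩
  rw [sub_eq_neg_add, hT.apply_add, ← h, hT.apply_neg_apply]

theorem image_toIcoMod (hT : IsFlow T) (hp : 0 < t₀) (ht₀ : t₀ ∈ hT.stabilizer M) (s : ℝ) :
    T (toIcoMod hp 0 s) '' M = T s '' M := by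
  have hk := hT.mem_stabilizer.1 (zsmul_mem ht₀ (toIcoDiv hp 0 s))
  conv_rhs => rw [← toIcoMod_add_toIcoDiv_zsmul hp 0 s, ← hT.image_image, hk]

theorem biUnion_Ico_image_eq_iUnion (hT : IsFlow T) (hp : 0 < t₀)
    (ht₀ : t₀ ∈ hT.stabilizer M) : ⋃ s ∈ Ico 0 t₀, T s '' M = ⋃ s, T s '' M := by
  refine (iUnion₂_subset_iUnion _ _).antisymm (iUnion_subset fun s => ?_)
  rw [← hT.image_toIcoMod hp ht₀ s]
  exact subset_biUnion_of_mem (u := fun s => T s '' M) (by simpa using toIcoMod_mem_Ico hp 0 s)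

theorem iUnion_image_eq_image_Icc_prod (hT : IsFlow T) (hp : 0 < t₀)
    (ht₀ : t₀ ∈ hT.stabilizer M) :
    ⋃ s, T s '' M = (fun p : ℝ × Y => T p.1 p.2) '' (Icc 0 t₀ ×ˢ M) := by
  rw [image_prod, ← iUnion_image_left]
  refine subset_antisymm ?_ (iUnion₂_subset_iUnion _ _)
  rw [← hT.biUnion_Ico_image_eq_iUnion hp ht₀]
  exact biUnion_mono Ico_subset_Icc_self fun _ _ => le_rfl

theorem iUnion_image_eq_univ [CompactSpace Y] [T2Space Y] (hT : IsFlow T)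
    (hmin : IsMinimalFlow T) (hM : IsClosed M) (hne : M.Nonempty) (hp : 0 < t₀)
    (ht₀ : t₀ ∈ hT.stabilizer M) : ⋃ s, T s '' M = univ := by
  have hclosed : IsClosed (⋃ s, T s '' M) := by
    rw [hT.iUnion_image_eq_image_Icc_prod hp ht₀]
    exact ((isCompact_Icc.prod hM.isCompact).image hT.continuous_uncurry).isClosed
  refine (hmin _ hclosed (hT.flowInvariant_iUnion_image M)).resolve_left ?_
  exact (nonempty_iUnion.2 ⟨0, hne.image (T 0)⟩).ne_empty

theorem coe_eq_coe_of_apply_eq (hT : IsFlow T) (hM : IsMinimalSubset (T r) M)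
    (hS : hT.stabilizer M ≤ AddSubgroup.zmultiples t₀) {s s' : ℝ} {m m' : Y} (hm : m ∈ M)
    (hm' : m' ∈ M) (h : T s m = T s' m') : (s : AddCircle t₀) = s' :=
  QuotientAddGroup.eq_iff_sub_mem.2 (hS (hT.sub_mem_stabilizer hM hm' hm h.symm))

theorem disjoint_image_of_mem_Ico (hT : IsFlow T) (hM : IsMinimalSubset (T r) M)
    (hS : hT.stabilizer M ≤ AddSubgroup.zmultiples t₀) (hp : 0 < t₀) {s₁ s₂ : ℝ}
    (hs₁ : s₁ ∈ Ico 0 t₀) (hs₂ : s₂ ∈ Ico 0 t₀) (hne : s₁ ≠ s₂) :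
    Disjoint (T s₁ '' M) (T s₂ '' M) := by
  have : Fact (0 < t₀) := ⟨hp⟩
  rw [Set.disjoint_left]
  rintro _ ⟨m₁, hm₁, rfl⟩ ⟨m₂, hm₂, h⟩
  refine hne ((AddCircle.coe_eq_coe_iff_of_mem_Ico (a := 0) ?_ ?_).1
    (hT.coe_eq_coe_of_apply_eq hM hS hm₁ hm₂ h.symm))
  · simpa using hs₁
  · simpa using hs₂

/-- The phase `T s m ↦ s mod t₀` (for `m ∈ M`), continuous because it factors through the
quotient map `Icc 0 t₀ ×ˢ M → Y`. -/
theorem exists_continuous_phase [CompactSpace Y] [T2Space Y] (hT : IsFlow T)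
    (hM : IsMinimalSubset (T r) M) (hS : hT.stabilizer M ≤ AddSubgroup.zmultiples t₀)
    (hcover : (fun p : ℝ × Y => T p.1 p.2) '' (Icc 0 t₀ ×ˢ M) = univ) :
    ∃ φ : Y → AddCircle t₀, Continuous φ ∧ ∀ u y, φ (T u y) = u + φ y := by
  have : CompactSpace ↥(Icc 0 t₀ ×ˢ M) :=
    isCompact_iff_compactSpace.1 (isCompact_Icc.prod hM.2.1.isCompact)
  let p : C(↥(Icc 0 t₀ ×ˢ M), Y) :=
    ⟨fun a => T a.1.1 a.1.2, hT.continuous_uncurry.comp continuous_subtype_val⟩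
  have hp_surj : Function.Surjective p := fun y => by
    obtain ⟨q, hq, hqy⟩ := hcover.symm.subset (mem_univ y)
    exact ⟨⟨q, hq⟩, hqy⟩
  have hq := p.continuous.isClosedMap.isQuotientMap p.continuous hp_surj
  let g : C(↥(Icc 0 t₀ ×ˢ M), AddCircle t₀) := ⟨fun a => (a.1.1 : AddCircle t₀), by fun_prop⟩
  have hg : Function.FactorsThrough g p := fun a b hab =>
    hT.coe_eq_coe_of_apply_eq hM hS a.2.2 b.2.2 hab
  have hφ : ∀ s, ∀ m ∈ M, hq.lift g hg (T s m) = s := by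
    intro s m hm
    obtain ⟨a, ha⟩ := hp_surj (T s m)
    rw [← ha, ← ContinuousMap.comp_apply, hq.lift_comp]
    exact hT.coe_eq_coe_of_apply_eq hM hS a.2.2 hm ha
  refine ⟨hq.lift g hg, (hq.lift g hg).continuous, fun u y => ?_⟩
  obtain ⟨⟨s, m⟩, ⟨-, hm⟩, rfl⟩ := hcover.symm.subset (mem_univ y)
  rw [← hT.apply_add, hφ _ _ hm, hφ _ _ hm, AddCircle.coe_add]

end IsFlow

theorem minimal_subset_structure_general {Y : Type*} [MetricSpace Y] [CompactSpace Y]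
    (T : ℝ → Y → Y) (hT : IsFlow T) (hmin : IsMinimalFlow T)
    (t : ℝ) (ht : 0 < t)
    (M : Set Y) (hMproper : M ≠ univ)
    (hMmin : IsMinimalSubset (T (1 / t)) M) :
    ∃ t₀ : ℝ, 0 < t₀ ∧
      ({s : ℝ | T s '' M = M} = {s : ℝ | ∃ m : ℤ, s = (m : ℝ) * t₀}) ∧
      ((∀ s₁ ∈ Ico (0 : ℝ) t₀, ∀ s₂ ∈ Ico (0 : ℝ) t₀, s₁ ≠ s₂ →
          Disjoint (T s₁ '' M) (T s₂ '' M)) ∧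
        (⋃ s ∈ Ico (0 : ℝ) t₀, T s '' M) = univ) ∧
      (1 / t₀ ∈ Eigenvalues T) ∧
      (∃ m : ℤ, m ≠ 0 ∧ 1 / t = (m : ℝ) * t₀) := by
  have ⟨hMne, hMclosed, hinv_mem, _⟩ := hMmin
  obtain ⟨t₀, ht₀, hS⟩ := AddSubgroup.exists_pos_eq_zmultiples_of_isClosed
    (hT.isClosed_stabilizer hMclosed) (hT.stabilizer_ne_top hmin hMclosed hMne hMproper)
    (AddSubgroup.ne_bot_iff_exists_ne_zero.2 ⟨⟨1 / t, hinv_mem⟩, by simpa using ht.ne'⟩)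
  have hmem_iff (s : ℝ) : s ∈ hT.stabilizer M ↔ ∃ m : ℤ, s = m * t₀ := by
    simp [hS, AddSubgroup.mem_zmultiples_iff, eq_comm]
  have ht₀_mem : t₀ ∈ hT.stabilizer M := hS ▸ AddSubgroup.mem_zmultiples t₀
  have hU := hT.iUnion_image_eq_univ hmin hMclosed hMne ht₀ ht₀_mem
  refine ⟨t₀, ht₀, Set.ext hmem_iff, ⟨fun s₁ hs₁ s₂ hs₂ =>
    hT.disjoint_image_of_mem_Ico hMmin hS.le ht₀ hs₁ hs₂, ?_⟩, ?_, ?_⟩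
  · rw [hT.biUnion_Ico_image_eq_iUnion ht₀ ht₀_mem, hU]
  · obtain ⟨φ, hφ, hφT⟩ := hT.exists_continuous_phase hMmin hS.le
      ((hT.iUnion_image_eq_image_Icc_prod ht₀ ht₀_mem).symm.trans hU)
    exact one_div_mem_eigenvalues_of_phase hφ hφT
  · obtain ⟨m, hm⟩ := (hmem_iff _).1 hinv_mem
    exact ⟨m, by rintro rfl; simp [ht.ne'] at hm, hm⟩

/-- Let `(Y, T)` be a minimal continuous flow, `t > 0` with the time-`1/t` map
not minimal, and `M` a nonempty proper closed subset of `Y` that is minimal for `T^{1/t}`. Then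
there is `t₀ > 0` such that (i) `{s : T^s M = M} = t₀ ℤ`; (ii) the sets `T^s M`, `0 ≤ s < t₀`,
are pairwise disjoint with union `Y`; (iii) `1/t₀` is an eigenvalue of `(Y, T)`; and
(iv) `1/t = m * t₀` for some nonzero integer `m`. -/
theorem minimal_subset_structure {Y : Type*} [MetricSpace Y] [CompactSpace Y] [Nonempty Y]
    (T : ℝ → Y → Y) (hT : IsFlow T) (hmin : IsMinimalFlow T)
    (t : ℝ) (ht : 0 < t) (h : ¬ IsMinimalMap (T (1 / t)))
    (M : Set Y) (hMne : M.Nonempty) (hMproper : M ≠ univ) (hMclosed : IsClosed M)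
    (hMmin : IsMinimalSubset (T (1 / t)) M) :
    ∃ t₀ : ℝ, 0 < t₀ ∧
      ({s : ℝ | T s '' M = M} = {s : ℝ | ∃ m : ℤ, s = (m : ℝ) * t₀}) ∧
      ((∀ s₁ ∈ Ico (0 : ℝ) t₀, ∀ s₂ ∈ Ico (0 : ℝ) t₀, s₁ ≠ s₂ →
          Disjoint (T s₁ '' M) (T s₂ '' M)) ∧
        (⋃ s ∈ Ico (0 : ℝ) t₀, T s '' M) = univ) ∧
      (1 / t₀ ∈ Eigenvalues T) ∧
      (∃ m : ℤ, m ≠ 0 ∧ 1 / t = (m : ℝ) * t₀) :=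
  minimal_subset_structure_general T hT hmin t ht M hMproper hMmin
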